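/- Fix 0 ≤ k ≤ n−1 and channels W, W̃ with d(W,W̃) ≤ ε. With the hybrid distributions P_{UV Y₁^{k+1} Ỹ_{k+2}ⁿ} and P_{UV Y₁ᵏ Ỹ_{k+1}ⁿ} as defined from a stochastic encoder E and Markov chain U—V—Xⁿ, the difference of conditional mutual informations satisfies |I(V; Y₁^{k+1} Ỹ_{k+2}ⁿ | U) − I(V; Y₁ᵏ Ỹ_{k+1}ⁿ | U)| ≤ 4ε log|𝒴| + 4H₂(ε). -/

import Mathlib

/-!
Conditioned on all other variables, the `(k+1)`-st output coordinate of the two hybrids is a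
mixture of rows of `W`, respectively `W'`, with the same weights, so the two conditional laws are
at ℓ¹-distance at most `ε`. In `I(V ; Yⁿ | U) = H(U,V) + H(U,Yⁿ) - H(U,V,Yⁿ) - H(U)` the first and
last entropies do not depend on the channel; by the chain rule and Fannes' inequality each of the
other two moves by at most `2ε log|𝒴| + 2H₂(ε)`. The factor `2` covers `ε > 1/2`, where Fannes'
inequality is replaced by `0 ≤ H ≤ log|𝒴|`.
-/

open Finset Real

noncomputable def H2 (e : ℝ) : ℝ := -(e * Real.logb 2 e) - (1 - e) * Real.logb 2 (1 - e)

def IsPMF {α : Type*} [Fintype α] (p : α → ℝ) : Prop :=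
  (∀ a, 0 ≤ p a) ∧ ∑ a, p a = 1

noncomputable def ent {α : Type*} [Fintype α] (p : α → ℝ) : ℝ :=
  -∑ a, p a * Real.logb 2 (p a)

/-- Conditional mutual information `I(B ; C | A)` for a joint distribution on `α × β × γ`. -/
noncomputable def condMI {α β γ : Type*} [Fintype α] [Fintype β] [Fintype γ]
    (p : α × β × γ → ℝ) : ℝ :=
  ent (fun x : α × β => ∑ c, p (x.1, x.2, c)) + ent (fun x : α × γ => ∑ b, p (x.1, b, x.2))
    - ent p - ent (fun a => ∑ b, ∑ c, p (a, b, c))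

theorem ConcaveOn.map_add_map_le_of_mem_Icc {s : Set ℝ} {f : ℝ → ℝ} (hf : ConcaveOn ℝ s f)
    {a b x y : ℝ} (ha : a ∈ s) (hb : b ∈ s) (hx : x ∈ Set.Icc a b) (hxy : x + y = a + b) :
    f a + f b ≤ f x + f y := by
  obtain ⟨hax, hxb⟩ := hx
  rcases (hax.trans hxb).eq_or_lt with rfl | hab
  · obtain rfl : x = a := le_antisymm hxb hax
    obtain rfl : y = x := by linarith
    rfl
  -- `x` and `y` are the convex combinations of `a` and `b` with swapped weights
  set l := (b - x) / (b - a)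
  have hl0 : 0 ≤ l := div_nonneg (by linarith) (by linarith)
  have hl1 : 0 ≤ 1 - l := by
    rw [one_sub_div (sub_pos.2 hab).ne']; exact div_nonneg (by linarith) (by linarith)
  have hx : l • a + (1 - l) • b = x := by simp only [smul_eq_mul, l]; field_simp; ring
  have hy : (1 - l) • a + l • b = y := by
    rw [show y = a + b - x by linarith]; simp only [smul_eq_mul, l]; field_simp; ring
  have h₁ := hf.2 ha hb hl0 hl1 (by ring)
  have h₂ := hf.2 ha hb hl1 hl0 (by ring)
  rw [hx] at h₁
  rw [hy] at h₂
  simp only [smul_eq_mul] at h₁ h₂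
  linarith

namespace Real

theorem negMulLog_one_sub_le {d : ℝ} (hd₀ : 0 ≤ d) (hd : d ≤ 1 / 2) :
    negMulLog (1 - d) ≤ negMulLog d := by
  rcases hd₀.eq_or_lt with rfl | hd₀
  · simp
  have h1d : 0 < 1 - d := by linarith
  set q := d / (1 - d)
  have hq : q * (1 - d) = d := div_mul_cancel₀ d h1d.ne'
  have hlogq : log d - log (1 - d) ≤ q - 1 := by
    rw [← log_div hd₀.ne' h1d.ne']; exact log_le_sub_one_of_pos (div_pos hd₀ h1d)
  have hlog1d : -log (1 - d) ≤ q := by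
    have := log_le_sub_one_of_pos (inv_pos.2 h1d)
    rw [log_inv] at this
    have h : (1 - d)⁻¹ - 1 = q := by simp only [q]; field_simp; ring
    linarith
  simp only [negMulLog]
  nlinarith [mul_le_mul_of_nonneg_left hlogq hd₀.le,
    mul_le_mul_of_nonneg_left hlog1d (by linarith : (0 : ℝ) ≤ 1 - 2 * d)]

theorem negMulLog_add_le_add {s d : ℝ} (hs : 0 ≤ s) (hd : 0 ≤ d) :
    negMulLog (s + d) ≤ negMulLog s + negMulLog d := by
  rcases hs.eq_or_lt with rfl | hs
  · simp
  rcases hd.eq_or_lt with rfl | hd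
  · simp
  have h₁ : log s ≤ log (s + d) := log_le_log hs (by linarith)
  have h₂ : log d ≤ log (s + d) := log_le_log hd (by linarith)
  simp only [negMulLog]
  nlinarith

theorem negMulLog_sub_negMulLog_add_le {s d : ℝ} (hs : 0 ≤ s) (hd : 0 ≤ d) (hsd : s + d ≤ 1) :
    negMulLog s - negMulLog (s + d) ≤ negMulLog (1 - d) := by
  have := concaveOn_negMulLog.map_add_map_le_of_mem_Icc (a := s) (b := 1) (x := s + d)
    (y := 1 - d) hs (Set.mem_Ici.2 zero_le_one) ⟨by linarith, hsd⟩ (by ring)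
  rw [negMulLog_one] at this
  linarith

theorem abs_negMulLog_sub_le {s t : ℝ} (hs : 0 ≤ s) (ht : 0 ≤ t) (hs₁ : s ≤ 1) (ht₁ : t ≤ 1)
    (hst : |s - t| ≤ 1 / 2) : |negMulLog s - negMulLog t| ≤ negMulLog |s - t| := by
  wlog h : s ≤ t generalizing s t
  · rw [abs_sub_comm, abs_sub_comm s] at *
    exact this ht hs ht₁ hs₁ hst (by linarith)
  obtain ⟨d, hd, rfl⟩ : ∃ d, 0 ≤ d ∧ t = s + d := ⟨t - s, by linarith, by ring⟩
  rw [show s - (s + d) = -d by ring, abs_neg, abs_of_nonneg hd] at *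
  rw [abs_le]
  constructor
  · linarith [negMulLog_add_le_add hs hd]
  · linarith [negMulLog_sub_negMulLog_add_le hs hd ht₁, negMulLog_one_sub_le hd hst]

theorem sum_negMulLog_le {Y : Type*} [Fintype Y] {p : Y → ℝ} (hp : ∀ y, 0 ≤ p y) :
    ∑ y, negMulLog (p y) ≤ (∑ y, p y) * log (Fintype.card Y) + negMulLog (∑ y, p y) := by
  cases isEmpty_or_nonempty Y
  · simp
  set N : ℝ := (Fintype.card Y : ℝ)
  have hN : 0 < N := by positivity
  have hjensen := concaveOn_negMulLog.le_map_sum (t := univ) (w := fun _ => N⁻¹) (p := p)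
    (fun _ _ => by positivity) (by simp [N, hN.ne']) (fun y _ => hp y)
  simp only [smul_eq_mul, ← mul_sum] at hjensen
  have hscale : N * negMulLog (N⁻¹ * ∑ y, p y) = (∑ y, p y) * log N + negMulLog (∑ y, p y) := by
    rw [negMulLog_mul]; simp only [negMulLog, log_inv]; field_simp
  calc ∑ y, negMulLog (p y) = N * (N⁻¹ * ∑ y, negMulLog (p y)) := by field_simp
    _ ≤ N * negMulLog (N⁻¹ * ∑ y, p y) := by gcongr
    _ = _ := hscale

end Real

theorem IsPMF.le_one {α : Type*} [Fintype α] {p : α → ℝ} (hp : IsPMF p) (a : α) : p a ≤ 1 :=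
  hp.2 ▸ single_le_sum (fun b _ => hp.1 b) (mem_univ a)

theorem ent_eq_sum_negMulLog_div {α : Type*} [Fintype α] (p : α → ℝ) :
    ent p = (∑ a, negMulLog (p a)) / log 2 := by
  simp only [ent, negMulLog, logb, sum_div, ← sum_neg_distrib]
  congr 1 with a
  ring

theorem H2_eq_binEntropy_div (e : ℝ) : H2 e = binEntropy e / log 2 := by
  simp only [H2, binEntropy_eq_negMulLog_add_negMulLog_one_sub, negMulLog, logb]
  ring

theorem ent_nonneg {α : Type*} [Fintype α] {p : α → ℝ} (hp : IsPMF p) : 0 ≤ ent p := by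
  rw [ent_eq_sum_negMulLog_div]
  exact div_nonneg (sum_nonneg fun a _ => negMulLog_nonneg (hp.1 a) (hp.le_one a))
    (log_nonneg one_le_two)

theorem ent_le_logb_card {α : Type*} [Fintype α] {p : α → ℝ} (hp : IsPMF p) :
    ent p ≤ logb 2 (Fintype.card α) := by
  rw [ent_eq_sum_negMulLog_div, logb]
  gcongr
  simpa [hp.2] using sum_negMulLog_le hp.1

-- Fannes' inequality
theorem abs_ent_sub_le_of_le_half {Y : Type*} [Fintype Y] {a b : Y → ℝ} (ha : IsPMF a)
    (hb : IsPMF b) {ε : ℝ} (hε : ε ≤ 1 / 2) (hab : ∑ y, |a y - b y| ≤ ε) :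
    |ent a - ent b| ≤ ε * logb 2 (Fintype.card Y) + H2 ε := by
  set δ := ∑ y, |a y - b y|
  have hδ : 0 ≤ δ := sum_nonneg fun y _ => abs_nonneg _
  have hpointwise : ∀ y, |a y - b y| ≤ 1 / 2 := fun y =>
    ((single_le_sum (fun y _ => abs_nonneg (a y - b y)) (mem_univ y)).trans hab).trans hε
  have hnats : |∑ y, negMulLog (a y) - ∑ y, negMulLog (b y)|
      ≤ ε * log (Fintype.card Y) + binEntropy ε :=
    calc |∑ y, negMulLog (a y) - ∑ y, negMulLog (b y)|
        ≤ ∑ y, |negMulLog (a y) - negMulLog (b y)| := by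
          rw [← sum_sub_distrib]; exact abs_sum_le_sum_abs _ _
      _ ≤ ∑ y, negMulLog |a y - b y| := sum_le_sum fun y _ =>
          abs_negMulLog_sub_le (ha.1 y) (hb.1 y) (ha.le_one y) (hb.le_one y) (hpointwise y)
      _ ≤ δ * log (Fintype.card Y) + negMulLog δ := sum_negMulLog_le fun y => abs_nonneg _
      _ ≤ ε * log (Fintype.card Y) + binEntropy δ := by
          gcongr
          rw [binEntropy_eq_negMulLog_add_negMulLog_one_sub, le_add_iff_nonneg_right]
          exact negMulLog_nonneg (by linarith) (by linarith)
      _ ≤ ε * log (Fintype.card Y) + binEntropy ε := by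
          gcongr
          exact binEntropy_strictMonoOn.monotoneOn ⟨hδ, by linarith⟩ ⟨hδ.trans hab, by
            linarith⟩ hab
  rw [ent_eq_sum_negMulLog_div, ent_eq_sum_negMulLog_div, H2_eq_binEntropy_div, logb, ← sub_div,
    abs_div, abs_of_pos (log_pos one_lt_two)]
  calc _ ≤ (ε * log (Fintype.card Y) + binEntropy ε) / log 2 := by gcongr
    _ = _ := by ring

theorem abs_ent_sub_le {Y : Type*} [Fintype Y] {a b : Y → ℝ} (ha : IsPMF a) (hb : IsPMF b)
    {ε : ℝ} (hε₀ : 0 ≤ ε) (hε₁ : ε ≤ 1) (hab : ∑ y, |a y - b y| ≤ ε) :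
    |ent a - ent b| ≤ 2 * ε * logb 2 (Fintype.card Y) + 2 * H2 ε := by
  have hlog : 0 ≤ logb 2 (Fintype.card Y) :=
    div_nonneg (log_natCast_nonneg _) (log_nonneg one_le_two)
  have hH2 : 0 ≤ H2 ε := by
    rw [H2_eq_binEntropy_div]; exact div_nonneg (binEntropy_nonneg hε₀ hε₁) (log_nonneg one_le_two)
  rcases le_or_gt ε (1 / 2) with hε | hε
  · have := abs_ent_sub_le_of_le_half ha hb hε hab
    nlinarith
  · have : |ent a - ent b| ≤ logb 2 (Fintype.card Y) := by
      rw [abs_le]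
      constructor <;> linarith [ent_nonneg ha, ent_nonneg hb, ent_le_logb_card ha,
        ent_le_logb_card hb]
    nlinarith

theorem ent_comp_equiv {α β : Type*} [Fintype α] [Fintype β] (e : α ≃ β) (p : β → ℝ) :
    ent (fun a => p (e a)) = ent p := by
  simp only [ent]
  rw [e.sum_comp (fun b => p b * logb 2 (p b))]

theorem ent_chain_rule {Z Y : Type*} [Fintype Z] [Fintype Y] (m : Z → ℝ) (a : Z → Y → ℝ)
    (ha : ∀ z, m z ≠ 0 → ∑ y, a z y = 1) :
    ent (fun zy : Z × Y => m zy.1 * a zy.1 zy.2) = ent m + ∑ z, m z * ent (a z) := by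
  have hrow : ∀ z, ∑ y, negMulLog (m z * a z y)
      = negMulLog (m z) + m z * ∑ y, negMulLog (a z y) := by
    intro z
    simp only [negMulLog_mul, sum_add_distrib, ← sum_mul, ← mul_sum]
    by_cases hz : m z = 0
    · simp [hz]
    · rw [ha z hz, one_mul]
  simp only [ent_eq_sum_negMulLog_div, Fintype.sum_prod_type, hrow, sum_add_distrib, add_div,
    sum_div, mul_div_assoc]

theorem sum_sum_mul_eq_sum {S Y : Type*} [Fintype S] [Fintype Y] (c : S → ℝ) {w : S → Y → ℝ}
    (hw : ∀ s, ∑ y, w s y = 1) : ∑ y, ∑ s, c s * w s y = ∑ s, c s := by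
  rw [sum_comm]
  simp only [← mul_sum, hw, mul_one]

theorem isPMF_mix_div {S Y : Type*} [Fintype S] [Fintype Y] {c : S → ℝ} (hc : ∀ s, 0 ≤ c s)
    (hc₀ : ∑ s, c s ≠ 0) {w : S → Y → ℝ} (hw : ∀ s, IsPMF (w s)) :
    IsPMF (fun y => (∑ s, c s * w s y) / ∑ s, c s) := by
  refine ⟨fun y => div_nonneg (sum_nonneg fun s _ => mul_nonneg (hc s) ((hw s).1 y))
    (sum_nonneg fun s _ => hc s), ?_⟩
  rw [← sum_div, sum_sum_mul_eq_sum c fun s => (hw s).2]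
  exact div_self hc₀

theorem sum_abs_mix_sub_le {S Y : Type*} [Fintype S] [Fintype Y] {c : S → ℝ}
    (hc : ∀ s, 0 ≤ c s) {w w' : S → Y → ℝ} {ε : ℝ} (hd : ∀ s, ∑ y, |w s y - w' s y| ≤ ε) :
    ∑ y, |∑ s, c s * w s y - ∑ s, c s * w' s y| ≤ (∑ s, c s) * ε :=
  calc ∑ y, |∑ s, c s * w s y - ∑ s, c s * w' s y|
      ≤ ∑ y, ∑ s, c s * |w s y - w' s y| := sum_le_sum fun y _ => by
        rw [← sum_sub_distrib]
        refine (abs_sum_le_sum_abs _ _).trans_eq (sum_congr rfl fun s _ => ?_)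
        rw [← mul_sub, abs_mul, abs_of_nonneg (hc s)]
    _ = ∑ s, c s * ∑ y, |w s y - w' s y| := by rw [sum_comm]; simp only [mul_sum]
    _ ≤ ∑ s, c s * ε := sum_le_sum fun s _ => mul_le_mul_of_nonneg_left (hd s) (hc s)
    _ = (∑ s, c s) * ε := by rw [sum_mul]

theorem abs_ent_mix_sub_le {Z S Y : Type*} [Fintype Z] [Fintype S] [Fintype Y]
    {c : Z → S → ℝ} (hc : ∀ z s, 0 ≤ c z s) (hc₁ : ∑ z, ∑ s, c z s = 1)
    {w w' : S → Y → ℝ} (hw : ∀ s, IsPMF (w s)) (hw' : ∀ s, IsPMF (w' s))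
    {ε : ℝ} (hε₀ : 0 ≤ ε) (hε₁ : ε ≤ 1) (hd : ∀ s, ∑ y, |w s y - w' s y| ≤ ε) :
    |ent (fun zy : Z × Y => ∑ s, c zy.1 s * w s zy.2)
      - ent (fun zy : Z × Y => ∑ s, c zy.1 s * w' s zy.2)|
      ≤ 2 * ε * logb 2 (Fintype.card Y) + 2 * H2 ε := by
  set m : Z → ℝ := fun z => ∑ s, c z s
  set C := 2 * ε * logb 2 (Fintype.card Y) + 2 * H2 ε
  have hm : ∀ z, 0 ≤ m z := fun z => sum_nonneg fun s _ => hc z s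
  have hchain : ∀ v : S → Y → ℝ, (∀ s, IsPMF (v s)) →
      ent (fun zy : Z × Y => ∑ s, c zy.1 s * v s zy.2)
        = ent m + ∑ z, m z * ent (fun y => (∑ s, c z s * v s y) / m z) := by
    intro v hv
    rw [← ent_chain_rule m _ fun z hz => (isPMF_mix_div (hc z) hz hv).2]
    congr 1 with ⟨z, y⟩
    -- where `m z = 0` the conditional law is the junk value `0 / 0 = 0`, but then `c z = 0`
    by_cases hz : m z = 0
    · have hcz : ∀ s, c z s = 0 := fun s => (sum_eq_zero_iff_of_nonneg fun s _ => hc z s).1 hz s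
        (mem_univ s)
      simp [hz, hcz]
    · exact (mul_div_cancel₀ _ hz).symm
  have hcond : ∀ z, m z * |ent (fun y => (∑ s, c z s * w s y) / m z)
      - ent (fun y => (∑ s, c z s * w' s y) / m z)| ≤ m z * C := by
    intro z
    rcases (hm z).eq_or_lt with hz | hz
    · simp [← hz]
    refine mul_le_mul_of_nonneg_left (abs_ent_sub_le (isPMF_mix_div (hc z) hz.ne' hw)
      (isPMF_mix_div (hc z) hz.ne' hw') hε₀ hε₁ ?_) hz.le
    simp only [← sub_div, abs_div, ← sum_div]
    rw [div_le_iff₀ (abs_pos.2 hz.ne'), abs_of_pos hz, mul_comm]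
    exact sum_abs_mix_sub_le (hc z) hd
  rw [hchain w hw, hchain w' hw', add_sub_add_left_eq_sub, ← sum_sub_distrib]
  calc _ ≤ ∑ z, |m z * (ent (fun y => (∑ s, c z s * w s y) / m z)
        - ent (fun y => (∑ s, c z s * w' s y) / m z))| := by
        simp only [mul_sub]; exact abs_sum_le_sum_abs _ _
    _ ≤ ∑ z, m z * C := sum_le_sum fun z _ => by rw [abs_mul, abs_of_nonneg (hm z)]; exact hcond z
    _ = C := by rw [← sum_mul, hc₁, one_mul]

theorem condMI_comp_equiv {α β γ γ' : Type*} [Fintype α] [Fintype β] [Fintype γ] [Fintype γ']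
    (e : γ' ≃ γ) (p : α × β × γ → ℝ) :
    condMI (fun t : α × β × γ' => p (t.1, t.2.1, e t.2.2)) = condMI p := by
  have hAB : (fun x : α × β => ∑ c, p (x.1, x.2, e c)) = fun x => ∑ c, p (x.1, x.2, c) :=
    funext fun x => e.sum_comp fun c => p (x.1, x.2, c)
  have hA : (fun a => ∑ b, ∑ c, p (a, b, e c)) = fun a => ∑ b, ∑ c, p (a, b, c) :=
    funext fun a => sum_congr rfl fun b _ => e.sum_comp fun c => p (a, b, c)
  have hAC : ent (fun x : α × γ' => ∑ b, p (x.1, b, e x.2))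
      = ent (fun x : α × γ => ∑ b, p (x.1, b, x.2)) :=
    ent_comp_equiv ((Equiv.refl α).prodCongr e) fun x : α × γ => ∑ b, p (x.1, b, x.2)
  have hABC : ent (fun t : α × β × γ' => p (t.1, t.2.1, e t.2.2)) = ent p :=
    ent_comp_equiv ((Equiv.refl α).prodCongr ((Equiv.refl β).prodCongr e)) p
  unfold condMI
  rw [hAB, hA, hAC, hABC]

theorem condMI_mix_eq {α β δ S Y : Type*} [Fintype α] [Fintype β] [Fintype δ] [Fintype S]
    [Fintype Y] (c : α × β × δ → S → ℝ) {v : S → Y → ℝ} (hv : ∀ s, ∑ y, v s y = 1) :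
    condMI (fun t : α × β × (Y × δ) => ∑ s, c (t.1, t.2.1, t.2.2.2) s * v s t.2.2.1)
      = ent (fun x : α × β => ∑ d, ∑ s, c (x.1, x.2, d) s)
        + ent (fun zy : (α × δ) × Y => ∑ bs : β × S, c (zy.1.1, bs.1, zy.1.2) bs.2 * v bs.2 zy.2)
        - ent (fun zy : (α × β × δ) × Y => ∑ s, c zy.1 s * v s zy.2)
        - ent (fun a => ∑ b, ∑ d, ∑ s, c (a, b, d) s) := by
  have hmarg : ∀ a b,
      ∑ yd : Y × δ, ∑ s, c (a, b, yd.2) s * v s yd.1 = ∑ d, ∑ s, c (a, b, d) s := by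
    intro a b
    rw [Fintype.sum_prod_type, sum_comm]
    exact sum_congr rfl fun d _ => sum_sum_mul_eq_sum (c (a, b, d)) hv
  let eABC : (α × β × δ) × Y ≃ α × β × (Y × δ) :=
    { toFun := fun zy => (zy.1.1, zy.1.2.1, zy.2, zy.1.2.2)
      invFun := fun t => ((t.1, t.2.1, t.2.2.2), t.2.2.1)
      left_inv := fun _ => rfl
      right_inv := fun _ => rfl }
  let eAC : (α × δ) × Y ≃ α × (Y × δ) :=
    { toFun := fun zy => (zy.1.1, zy.2, zy.1.2)
      invFun := fun t => ((t.1, t.2.2), t.2.1)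
      left_inv := fun _ => rfl
      right_inv := fun _ => rfl }
  simp only [condMI, hmarg]
  rw [← ent_comp_equiv eAC, ← ent_comp_equiv eABC]
  simp only [eAC, eABC, Equiv.coe_fn_mk, Fintype.sum_prod_type]

theorem abs_condMI_mix_sub_le {α β δ S Y : Type*} [Fintype α] [Fintype β] [Fintype δ]
    [Fintype S] [Fintype Y] {c : α × β × δ → S → ℝ} (hc : ∀ t s, 0 ≤ c t s)
    (hc₁ : ∑ t, ∑ s, c t s = 1) {w w' : S → Y → ℝ} (hw : ∀ s, IsPMF (w s))
    (hw' : ∀ s, IsPMF (w' s)) {ε : ℝ} (hε₀ : 0 ≤ ε) (hε₁ : ε ≤ 1)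
    (hd : ∀ s, ∑ y, |w s y - w' s y| ≤ ε) :
    |condMI (fun t : α × β × (Y × δ) => ∑ s, c (t.1, t.2.1, t.2.2.2) s * w s t.2.2.1)
      - condMI (fun t : α × β × (Y × δ) => ∑ s, c (t.1, t.2.1, t.2.2.2) s * w' s t.2.2.1)|
      ≤ 4 * ε * logb 2 (Fintype.card Y) + 4 * H2 ε := by
  have hcAC : ∑ ad : α × δ, ∑ bs : β × S, c (ad.1, bs.1, ad.2) bs.2 = 1 := by
    simp only [Fintype.sum_prod_type] at hc₁ ⊢
    rw [← hc₁]
    exact sum_congr rfl fun a _ => sum_comm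
  have hAC := abs_ent_mix_sub_le (c := fun (ad : α × δ) (bs : β × S) => c (ad.1, bs.1, ad.2) bs.2)
    (fun _ _ => hc _ _) hcAC (fun bs => hw bs.2) (fun bs => hw' bs.2) hε₀ hε₁ (fun bs => hd bs.2)
  have hABC := abs_ent_mix_sub_le hc hc₁ hw hw' hε₀ hε₁ hd
  rw [condMI_mix_eq c fun s => (hw s).2, condMI_mix_eq c fun s => (hw' s).2]
  rw [abs_le] at hAC hABC ⊢
  constructor <;> linarith [hAC.1, hAC.2, hABC.1, hABC.2]

theorem sum_pi_prod_eq_one {ι Y : Type*} [Fintype ι] [DecidableEq ι] [Fintype Y]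
    {f : ι → Y → ℝ} (hf : ∀ i, ∑ y, f i y = 1) : ∑ g : ι → Y, ∏ i, f i (g i) = 1 := by
  rw [← Fintype.prod_sum]
  exact prod_eq_one fun i _ => hf i

theorem prod_funSplitAt_symm {ι Y : Type*} [Fintype ι] [DecidableEq ι] (f : ι → Y → ℝ) (κ : ι)
    (y : Y) (g : {i // i ≠ κ} → Y) :
    ∏ i, f i ((Equiv.funSplitAt κ Y).symm (y, g) i) = f κ y * ∏ i : {i // i ≠ κ}, f i (g i) := by
  rw [Fintype.prod_eq_mul_prod_subtype_ne _ κ]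
  congr 1
  · simp
  · exact prod_congr rfl fun i _ => by simp [i.2]

section ChannelJoint

variable {α β ι X Y : Type*} [Fintype ι] [DecidableEq ι] [Fintype X]

/-- The law of `(A, B, Y)` when `(A, B, X) ∼ Q` and each `Yᵢ` is the output of the channel
`ch i` on the input `Xᵢ`. -/
def channelJoint (ch : ι → X → Y → ℝ) (Q : α × β → (ι → X) → ℝ) : α × β × (ι → Y) → ℝ :=
  fun t => ∑ x, (∏ i, ch i (x i) (t.2.2 i)) * Q (t.1, t.2.1) x

theorem channelJoint_funSplitAt_symm (ch : ι → X → Y → ℝ) (Q : α × β → (ι → X) → ℝ) (κ : ι) :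
    (fun t : α × β × (Y × ({i // i ≠ κ} → Y)) =>
      channelJoint ch Q (t.1, t.2.1, (Equiv.funSplitAt κ Y).symm t.2.2))
      = fun t => ∑ x, ((∏ i : {i // i ≠ κ}, ch i (x i) (t.2.2.2 i)) * Q (t.1, t.2.1) x)
          * ch κ (x κ) t.2.2.1 := by
  funext ⟨a, b, y, g⟩
  refine sum_congr rfl fun x _ => ?_
  rw [prod_funSplitAt_symm (fun i => ch i (x i))]
  ring

theorem abs_condMI_channelJoint_sub_le [Fintype α] [Fintype β] [Fintype Y]
    {ch ch' : ι → X → Y → ℝ} {Q : α × β → (ι → X) → ℝ} (κ : ι) (hch : ∀ i x, IsPMF (ch i x)) (hch'κ : ∀ x, IsPMF (ch' κ x))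
    (hagree : ∀ i, i ≠ κ → ch' i = ch i) (hQ : ∀ t x, 0 ≤ Q t x) (hQ₁ : ∑ t, ∑ x, Q t x = 1)
    {ε : ℝ} (hε₀ : 0 ≤ ε) (hε₁ : ε ≤ 1) (hd : ∀ x, ∑ y, |ch κ x y - ch' κ x y| ≤ ε) :
    |condMI (channelJoint ch Q) - condMI (channelJoint ch' Q)|
      ≤ 4 * ε * logb 2 (Fintype.card Y) + 4 * H2 ε := by
  let c : α × β × ({i // i ≠ κ} → Y) → (ι → X) → ℝ := fun t x =>
    (∏ i : {i // i ≠ κ}, ch i (x i) (t.2.2 i)) * Q (t.1, t.2.1) x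
  have hc₀ : ∀ t x, 0 ≤ c t x := fun t x =>
    mul_nonneg (prod_nonneg fun i _ => (hch i _).1 _) (hQ _ x)
  have hc₁ : ∑ t, ∑ x, c t x = 1 := by
    simp only [c, Fintype.sum_prod_type] at hQ₁ ⊢
    rw [← hQ₁]
    refine sum_congr rfl fun a _ => sum_congr rfl fun b _ => ?_
    rw [sum_comm]
    refine sum_congr rfl fun x _ => ?_
    rw [← sum_mul, sum_pi_prod_eq_one (f := fun i : {i // i ≠ κ} => ch i (x i))
      fun i => (hch i (x i)).2, one_mul]
  have hsplit' := channelJoint_funSplitAt_symm ch' Q κ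
  simp only [fun i : {i // i ≠ κ} => hagree i i.2] at hsplit'
  rw [← condMI_comp_equiv (Equiv.funSplitAt κ Y).symm (channelJoint ch Q),
    ← condMI_comp_equiv (Equiv.funSplitAt κ Y).symm (channelJoint ch' Q),
    channelJoint_funSplitAt_symm, hsplit']
  exact abs_condMI_mix_sub_le hc₀ hc₁ (fun x => hch κ (x κ)) (fun x => hch'κ (x κ)) hε₀ hε₁
    fun x => hd (x κ)

end ChannelJoint

theorem hybrid_mutual_information_step_general
    {X Y U V : Type*} [Fintype X] [Fintype Y] [Fintype U] [Fintype V]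
    (ε : ℝ) (hε : ε ∈ Set.Ioo (0 : ℝ) 1)
    (W W' : X → Y → ℝ) (hW : ∀ x, IsPMF (W x)) (hW' : ∀ x, IsPMF (W' x))
    (hd : ∀ x, ∑ y, |W x y - W' x y| ≤ ε)
    (n : ℕ) (PU : U → ℝ) (PVU : U → V → ℝ) (E : V → (Fin n → X) → ℝ)
    (hPU : IsPMF PU) (hPVU : ∀ u, IsPMF (PVU u)) (hE : ∀ v, IsPMF (E v))
    (P : ℕ → U × V × (Fin n → Y) → ℝ)
    (hP : ∀ k, P k = fun t => ∑ x : Fin n → X,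
        (∏ i : Fin n, if (i : ℕ) < k then W (x i) (t.2.2 i) else W' (x i) (t.2.2 i))
          * E t.2.1 x * PVU t.1 t.2.1 * PU t.1)
    (k : ℕ) (hk : k + 1 ≤ n) :
    |condMI (P (k + 1)) - condMI (P k)| ≤ 4 * ε * Real.logb 2 (Fintype.card Y) + 4 * H2 ε := by
  let hyb : ℕ → Fin n → X → Y → ℝ := fun j i => if (i : ℕ) < j then W else W'
  let Q : U × V → (Fin n → X) → ℝ := fun uv x => E uv.2 x * PVU uv.1 uv.2 * PU uv.1
  have hPj : ∀ j, P j = channelJoint (hyb j) Q := fun j => by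
    rw [hP]
    funext t
    exact sum_congr rfl fun x _ => by simp only [hyb, Q, ite_apply]; ring
  have hhyb : ∀ j i x, IsPMF (hyb j i x) := fun j i x => by
    dsimp only [hyb]
    split_ifs
    exacts [hW x, hW' x]
  have hagree : ∀ i : Fin n, i ≠ ⟨k, hk⟩ → hyb k i = hyb (k + 1) i := fun i hi => by
    have : (i : ℕ) ≠ k := fun h => hi (Fin.ext h)
    simp only [hyb]
    congr 1
    exact propext (by omega)
  have hQ₁ : ∑ uv, ∑ x, Q uv x = 1 := by
    simp only [Q, Fintype.sum_prod_type, ← sum_mul, (hE _).2, (hPVU _).2, one_mul, hPU.2]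
  rw [hPj, hPj]
  exact abs_condMI_channelJoint_sub_le ⟨k, hk⟩ (hhyb (k + 1)) (hhyb k _) hagree
    (fun uv x => mul_nonneg (mul_nonneg ((hE _).1 x) ((hPVU _).1 _)) (hPU.1 _)) hQ₁
    hε.1.le hε.2.le (by simpa [hyb] using hd)

/-- one hybrid step changes the conditional mutual information by
at most `4ε log|𝒴| + 4H₂(ε)`. -/
theorem hybrid_mutual_information_step
    {X Y U V : Type*} [Fintype X] [Fintype Y] [Fintype U] [Fintype V]
    [Nonempty X] [Nonempty Y] [Nonempty U] [Nonempty V]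
    (ε : ℝ) (hε : ε ∈ Set.Ioo (0 : ℝ) 1)
    (W W' : X → Y → ℝ) (hW : ∀ x, IsPMF (W x)) (hW' : ∀ x, IsPMF (W' x))
    (hd : ∀ x, ∑ y, |W x y - W' x y| ≤ ε)
    (n : ℕ) (PU : U → ℝ) (PVU : U → V → ℝ) (E : V → (Fin n → X) → ℝ)
    (hPU : IsPMF PU) (hPVU : ∀ u, IsPMF (PVU u)) (hE : ∀ v, IsPMF (E v))
    (P : ℕ → U × V × (Fin n → Y) → ℝ)
    (hP : ∀ k, P k = fun t => ∑ x : Fin n → X,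
        (∏ i : Fin n, if (i : ℕ) < k then W (x i) (t.2.2 i) else W' (x i) (t.2.2 i))
          * E t.2.1 x * PVU t.1 t.2.1 * PU t.1)
    (k : ℕ) (hk : k + 1 ≤ n) :
    |condMI (P (k + 1)) - condMI (P k)| ≤ 4 * ε * Real.logb 2 (Fintype.card Y) + 4 * H2 ε :=
  hybrid_mutual_information_step_general ε hε W W' hW hW' hd n PU PVU E hPU hPVU hE P hP k hk
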